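/- For ℓ ≥ 4 and k ≥ 2, (N_{k,ℓ+1} - 2)! · (k-1)^{k-1} / ((N_{k,ℓ} - 1)! · (N_{k,ℓ}!)^{k-2}) ≤ (N_{k,ℓ+1} - 3)!, where N_{k,j} = (k^j - 1)/(k-1). Equivalently, (N_{k,ℓ+1} - 2) · (k-1)^{k-1} ≤ (N_{k,ℓ} - 1)! · (N_{k,ℓ}!)^{k-2}. -/

import Mathlib

def Ncount (k l : ℕ) : ℕ := (k ^ l - 1) / (k - 1)

/-!
Put `N = N_{k,ℓ}`, so that `N_{k,ℓ+1} = kN + 1` and `N ≥ k^{ℓ-1} ≥ k³`. Cancelling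
`(kN - 2)!`, the real inequality reduces to the natural one, and there
`k N (k-1)^{k-1} ≤ N · k^k ≤ N · (k³)^{k-1} ≤ N^k = N² · N^{k-2} ≤ (N-1)! · (N!)^{k-2}`;
the last step holds because `N² ≤ (N-1)!` once `N ≥ 6`.
-/

open Finset Nat

theorem Ncount_eq_sum_range_pow {k : ℕ} (hk : 2 ≤ k) (l : ℕ) :
    Ncount k l = ∑ i ∈ range l, k ^ i :=
  (Nat.geomSum_eq hk l).symm

theorem Ncount_succ {k : ℕ} (hk : 2 ≤ k) (l : ℕ) : Ncount k (l + 1) = k * Ncount k l + 1 := by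
  rw [Ncount_eq_sum_range_pow hk, Ncount_eq_sum_range_pow hk, sum_range_succ', mul_sum]
  simp only [pow_succ', pow_zero]

theorem pow_pred_le_Ncount {k : ℕ} (hk : 2 ≤ k) {l : ℕ} (hl : 1 ≤ l) :
    k ^ (l - 1) ≤ Ncount k l := by
  rw [Ncount_eq_sum_range_pow hk]
  exact single_le_sum (fun _ _ ↦ Nat.zero_le _) (mem_range.mpr (by omega))

theorem pow_three_le_Ncount {k l : ℕ} (hk : 2 ≤ k) (hl : 4 ≤ l) : k ^ 3 ≤ Ncount k l :=
  (Nat.pow_le_pow_right (by omega) (by omega)).trans (pow_pred_le_Ncount hk (by omega))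

theorem succ_sq_le_factorial {n : ℕ} (hn : 5 ≤ n) : (n + 1) ^ 2 ≤ n ! := by
  induction n, hn using Nat.le_induction with
  | base => decide
  | succ n hn ih =>
    calc (n + 1 + 1) ^ 2 ≤ (n + 1) * (n + 1) ^ 2 := by nlinarith
      _ ≤ (n + 1) * n ! := Nat.mul_le_mul_left _ ih
      _ = (n + 1)! := (factorial_succ n).symm

theorem sq_le_factorial_pred {N : ℕ} (hN : 6 ≤ N) : N ^ 2 ≤ (N - 1)! := by
  obtain ⟨n, rfl⟩ : ∃ n, N = n + 1 := ⟨N - 1, by omega⟩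
  exact succ_sq_le_factorial (by omega)

theorem mul_mul_pow_le_factorial_pred_mul {k N : ℕ} (hk : 2 ≤ k) (hN : k ^ 3 ≤ N) :
    k * N * (k - 1) ^ (k - 1) ≤ (N - 1)! * N ! ^ (k - 2) := by
  have h8N : 8 ≤ N := (Nat.pow_le_pow_left hk 3).trans hN
  have hk_pow : k * (k - 1) ^ (k - 1) ≤ N ^ (k - 1) :=
    calc k * (k - 1) ^ (k - 1) ≤ k * k ^ (k - 1) :=
          Nat.mul_le_mul_left _ (Nat.pow_le_pow_left (by omega) _)
      _ = k ^ k := by rw [← pow_succ']; congr 1; omega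
      _ ≤ k ^ (3 * (k - 1)) := Nat.pow_le_pow_right (by omega) (by omega)
      _ = (k ^ 3) ^ (k - 1) := pow_mul k 3 (k - 1)
      _ ≤ N ^ (k - 1) := Nat.pow_le_pow_left hN _
  calc k * N * (k - 1) ^ (k - 1) = N * (k * (k - 1) ^ (k - 1)) := by ring
    _ ≤ N * N ^ (k - 1) := Nat.mul_le_mul_left _ hk_pow
    _ = N ^ 2 * N ^ (k - 2) := by rw [← pow_succ', ← pow_add]; congr 1; omega
    _ ≤ (N - 1)! * N ! ^ (k - 2) :=
      Nat.mul_le_mul (sq_le_factorial_pred (by omega)) (Nat.pow_le_pow_left (self_le_factorial N) _)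

theorem factorial_succ_mul_div_le {n : ℕ} {c D : ℝ} (hD : 0 < D)
    (h : (n + 1 : ℝ) * c ≤ D) : ((n + 1)! : ℝ) * c / D ≤ n ! := by
  rw [div_le_iff₀ hD, factorial_succ, cast_mul, cast_succ, mul_comm ((n : ℝ) + 1), mul_assoc]
  exact mul_le_mul_of_nonneg_left h (by positivity)

/-- For `ℓ ≥ 4` and `k ≥ 2`:
`(N_{k,ℓ+1}-2)!·(k-1)^{k-1}/((N_{k,ℓ}-1)!·(N_{k,ℓ}!)^{k-2}) ≤ (N_{k,ℓ+1}-3)!`;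
equivalently `(N_{k,ℓ+1}-2)·(k-1)^{k-1} ≤ (N_{k,ℓ}-1)!·(N_{k,ℓ}!)^{k-2}`. -/
theorem stmt12 (k l : ℕ) (hk : 2 ≤ k) (hl : 4 ≤ l) :
    ((Ncount k (l + 1) - 2).factorial : ℝ) * ((k : ℝ) - 1) ^ (k - 1) /
        (((Ncount k l - 1).factorial : ℝ) * ((Ncount k l).factorial : ℝ) ^ (k - 2)) ≤
      ((Ncount k (l + 1) - 3).factorial : ℝ) ∧
    (Ncount k (l + 1) - 2) * (k - 1) ^ (k - 1) ≤
      (Ncount k l - 1).factorial * (Ncount k l).factorial ^ (k - 2) := by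
  set N := Ncount k l
  have hN : k ^ 3 ≤ N := pow_three_le_Ncount hk hl
  have h8N : 8 ≤ N := (Nat.pow_le_pow_left hk 3).trans hN
  have h2N : 2 ≤ k * N := le_mul_of_le_of_one_le hk (by omega)
  rw [Ncount_succ hk, show k * N + 1 - 2 = k * N - 2 + 1 by omega,
    show k * N + 1 - 3 = k * N - 2 by omega]
  have hnat : (k * N - 2 + 1) * (k - 1) ^ (k - 1) ≤ (N - 1)! * N ! ^ (k - 2) :=
    (Nat.mul_le_mul_right _ (by omega)).trans (mul_mul_pow_le_factorial_pred_mul hk hN)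
  refine ⟨factorial_succ_mul_div_le (by positivity) ?_, hnat⟩
  rw [← cast_pred (by omega)]
  exact_mod_cast hnat
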